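/- Let (X, 𝓘) be a matroid of rank K and let f : 𝓘 → ℝ be a polymatroid function on 𝓘. Suppose the set 𝓔_f of polymatroid set functions g : 2^X → ℝ that agree with f on 𝓘 is nonempty, and let d = inf{c(g) : g ∈ 𝓔_f}, where c(g) is the total curvature of g. Then every greedy solution G_K and every optimal solution O satisfy (1 + d) · f(G_K) ≥ f(O). If moreover (X, 𝓘) is the uniform matroid of rank K and d > 0, then f(G_K) ≥ (1/d) · (1 − (1 − d/K)^K) · f(O). -/

import Mathlib

open Finset

variable {α : Type*} [DecidableEq α] [Fintype α]

/-- Monotone set function. -/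
def SetMonotone (f : Finset α → ℝ) : Prop :=
  ∀ ⦃A B : Finset α⦄, A ⊆ B → f A ≤ f B

/-- Submodular set function. -/
def SetSubmodular (f : Finset α → ℝ) : Prop :=
  ∀ ⦃A B : Finset α⦄, A ⊆ B → ∀ j ∉ B, f (insert j A) - f A ≥ f (insert j B) - f B

/-- Polymatroid set function: monotone, submodular, and `f ∅ = 0`. -/
def PolymatroidFn (f : Finset α → ℝ) : Prop :=
  SetMonotone f ∧ SetSubmodular f ∧ f ∅ = 0

/-- Hereditary collection of sets. -/
def Hereditary (I : Finset α → Prop) : Prop :=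
  ∀ ⦃B⦄, I B → ∀ ⦃A⦄, A ⊆ B → I A

/-- Independence system: nonempty hereditary collection. -/
def IndepSystem (I : Finset α → Prop) : Prop :=
  (∃ S, I S) ∧ Hereditary I

/-- Augmentation property. -/
def Augmentation (I : Finset α → Prop) : Prop :=
  ∀ ⦃A B⦄, I A → I B → A.card < B.card → ∃ j ∈ B, j ∉ A ∧ I (insert j A)

/-- Matroid: independence system with augmentation. -/
def IsMatroid (I : Finset α → Prop) : Prop :=
  IndepSystem I ∧ Augmentation I

/-- One step of the greedy algorithm: add a feasible element of largest gain. -/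
def GreedyStep (I : Finset α → Prop) (f : Finset α → ℝ) (S S' : Finset α) : Prop :=
  ∃ a ∉ S, I (insert a S) ∧ S' = insert a S ∧
    ∀ b ∉ S, I (insert b S) → f (insert b S) ≤ f (insert a S)

/-- Greedy solution: obtained from `∅` by greedy steps, and no further feasible addition. -/
def IsGreedy (I : Finset α → Prop) (f : Finset α → ℝ) (G : Finset α) : Prop :=
  Relation.ReflTransGen (GreedyStep I f) ∅ G ∧ ∀ a ∉ G, ¬ I (insert a G)

/-- Optimal solution: member of the constraint maximizing `f`. -/
def IsOptimal (I : Finset α → Prop) (f : Finset α → ℝ) (O : Finset α) : Prop :=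
  I O ∧ ∀ S, I S → f S ≤ f O

/-- `B` is a basis of `S`: a maximal independent subset of `S`. -/
def IsBasisOf (I : Finset α → Prop) (S B : Finset α) : Prop :=
  B ⊆ S ∧ I B ∧ ∀ ⦃B' : Finset α⦄, I B' → B ⊆ B' → B' ⊆ S → B' = B

/-- Lower rank of `S`: minimum cardinality of a basis of `S`. -/
noncomputable def lr (I : Finset α → Prop) (S : Finset α) : ℕ :=
  sInf {n : ℕ | ∃ B, IsBasisOf I S B ∧ B.card = n}

/-- Upper rank of `S`: maximum cardinality of a basis of `S`. -/
noncomputable def ur (I : Finset α → Prop) (S : Finset α) : ℕ :=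
  sSup {n : ℕ | ∃ B, IsBasisOf I S B ∧ B.card = n}

/-- Rank quotient `q(X, 𝓘)`. -/
noncomputable def rankQuotient (I : Finset α → Prop) : ℝ :=
  sInf {x : ℝ | ∃ S : Finset α, 0 < ur I S ∧ x = (lr I S : ℝ) / (ur I S : ℝ)}

/-- Total curvature `c(f)`. -/
noncomputable def totalCurvature (f : Finset α → ℝ) : ℝ :=
  sSup {x : ℝ | ∃ j : α, f {j} ≠ f ∅ ∧
    x = 1 - (f Finset.univ - f (Finset.univ.erase j)) / (f {j} - f ∅)}

/-- Partial curvature `b(f)`, over pairs `(j, A)` with `j ∈ A ∈ 𝓘`. -/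
noncomputable def partialCurvature (I : Finset α → Prop) (f : Finset α → ℝ) : ℝ :=
  sSup {x : ℝ | ∃ (j : α) (A : Finset α), I A ∧ j ∈ A ∧ f {j} ≠ f ∅ ∧
    x = 1 - (f A - f (A.erase j)) / (f {j} - f ∅)}

/-- Total `k`-batch curvature `c_k`. -/
noncomputable def batchCurvature (f : Finset α → ℝ) (k : ℕ) : ℝ :=
  sSup {x : ℝ | ∃ J : Finset α, J.card = k ∧ f J ≠ f ∅ ∧
    x = 1 - (f Finset.univ - f (Finset.univ \ J)) / (f J - f ∅)}

/-- Polymatroid function defined on a collection `𝓘`. -/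
def PolymatroidOn (I : Finset α → Prop) (f : Finset α → ℝ) : Prop :=
  f ∅ = 0 ∧ (∀ ⦃A B : Finset α⦄, A ⊆ B → I B → f A ≤ f B) ∧
    ∀ ⦃A B : Finset α⦄, A ⊆ B → ∀ j ∉ B, I (insert j B) →
      f (insert j A) - f A ≥ f (insert j B) - f B

/-- One step of the batched greedy algorithm: add a feasible batch of size `k`
of largest gain. -/
def BatchStep (I : Finset α → Prop) (f : Finset α → ℝ) (k : ℕ) (S S' : Finset α) : Prop :=
  ∃ J : Finset α, Disjoint J S ∧ J.card = k ∧ I (S ∪ J) ∧ S' = S ∪ J ∧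
    ∀ J' : Finset α, Disjoint J' S → J'.card = k → I (S ∪ J') → f (S ∪ J') ≤ f (S ∪ J)

/-- `k`-batch greedy solution: `l - 1` batches of size `k` followed by one batch of
size `m`. -/
def IsBatchGreedy (I : Finset α → Prop) (f : Finset α → ℝ) (k l m : ℕ)
    (S : Finset α) : Prop :=
  ∃ T : ℕ → Finset α, T 0 = ∅ ∧ (∀ t < l - 1, BatchStep I f k (T t) (T (t + 1))) ∧
    BatchStep I f m (T (l - 1)) S

/-!
Fix a polymatroid extension `g` of `f` of curvature at most `c` and let `ρ i` be the gain of the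
`i`-th greedy step, `Gₜ` the set of the first `t` greedy choices. Curvature bounds `g (O ∪ Gₜ)`
from below by `g O + (1 - c) * ∑ {ρ i | i < t, a i ∉ O}`, and submodularity bounds it from above
by `g Gₜ` plus the marginal gains of `O \ Gₜ` on `Gₜ`.

On a matroid, each `o ∈ O \ G` can be charged to the last step at which it was still admissible:
its marginal gain on `G` is at most the gain of that step, and augmentation shows that these
steps are dominated, prefix by prefix, by the steps choosing elements outside `O`. Since the
gains decrease, this gives `g O ≤ (1 + c) g G`.

On the uniform matroid every element of `O \ Gₜ` is admissible at step `t`, so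
`g O - ∑ {ρ i | a i ∈ O} - c ∑ {ρ i | a i ∉ O} ≤ |O \ Gₜ| ρ t` for every `t < K`; an induction over
the remaining steps turns these inequalities into `g G ≥ (1 - (1 - c / K) ^ K) / c * g O`.

Both bounds are continuous in `c`, so they pass to the infimum `d` over all extensions.
-/

/-- The fraction of `g O` that `s` more greedy steps guarantee while `r` elements of `O` are
still missing. -/
noncomputable def greedyRatio (c : ℝ) (s r : ℕ) : ℝ :=
  (1 - (1 - c / r) ^ s) / c

section GreedyRatio

variable {c : ℝ}

lemma one_sub_le_one_sub_div_pow (hc0 : 0 ≤ c) (hc1 : c ≤ 1) {s r : ℕ} (hs : s ≤ r) :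
    1 - c ≤ (1 - c / r) ^ s := by
  rcases Nat.eq_zero_or_pos s with rfl | hs0
  · simpa using hc0
  have hr : (1 : ℝ) ≤ r := by exact_mod_cast hs0.trans_le hs
  have hcr : c / r ≤ 1 := (div_le_one (by linarith)).2 (by linarith)
  have hsc : s * (c / r) ≤ c := by
    calc s * (c / r) ≤ r * (c / r) := by gcongr
      _ = c := mul_div_cancel₀ _ (by positivity)
  have h : 1 - s * (c / r) ≤ (1 - c / r) ^ s := by
    simpa [sub_eq_add_neg] using one_add_mul_le_pow (a := -(c / r)) (by linarith) s
  linarith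

lemma one_sub_div_mem_Icc (hc0 : 0 ≤ c) (hc1 : c ≤ 1) {r : ℕ} (hr : 0 < r) :
    1 - c / r ∈ Set.Icc (0 : ℝ) 1 := by
  have hr' : (1 : ℝ) ≤ r := by exact_mod_cast hr
  have : c / r ≤ 1 := (div_le_one (by linarith)).2 (by linarith)
  have : 0 ≤ c / r := by positivity
  constructor <;> linarith

lemma greedyRatio_zero (r : ℕ) : greedyRatio c 0 r = 0 := by
  simp [greedyRatio]

lemma mul_greedyRatio (hc : c ≠ 0) (s r : ℕ) : c * greedyRatio c s r = 1 - (1 - c / r) ^ s :=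
  mul_div_cancel₀ _ hc

lemma greedyRatio_nonneg (hc0 : 0 < c) (hc1 : c ≤ 1) (s : ℕ) {r : ℕ} (hr : 0 < r) :
    0 ≤ greedyRatio c s r := by
  obtain ⟨h0, h1⟩ := one_sub_div_mem_Icc hc0.le hc1 hr
  exact div_nonneg (sub_nonneg.2 (pow_le_one₀ h0 h1)) hc0.le

lemma mul_greedyRatio_le_one (hc0 : 0 < c) (hc1 : c ≤ 1) (s : ℕ) {r : ℕ} (hr : 0 < r) :
    c * greedyRatio c s r ≤ 1 := by
  rw [mul_greedyRatio hc0.ne']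
  have := pow_nonneg (one_sub_div_mem_Icc hc0.le hc1 hr).1 s
  linarith

lemma greedyRatio_le_one (hc0 : 0 < c) (hc1 : c ≤ 1) {s r : ℕ} (hs : s ≤ r) :
    greedyRatio c s r ≤ 1 := by
  rw [greedyRatio, div_le_one hc0]
  linarith [one_sub_le_one_sub_div_pow hc0.le hc1 hs]

lemma greedyRatio_succ (hc : c ≠ 0) (s r : ℕ) :
    greedyRatio c (s + 1) r = greedyRatio c s r + (1 - c * greedyRatio c s r) / r := by
  rw [mul_greedyRatio hc, greedyRatio, greedyRatio, pow_succ]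
  rcases eq_or_ne (r : ℝ) 0 with hr | hr
  · simp [hr]
  · field_simp
    ring

/-- The recursion `D (s + 1) = (1 - c / (r + 1)) * D s + c / (r + 1) * (1 - c / r) ^ s` for
the right-hand side `D s` keeps it above `1 - c`. -/
lemma one_sub_le_succ_mul_pow_sub_mul_pow (hc0 : 0 ≤ c) (hc1 : c ≤ 1) {s r : ℕ} (hs : s ≤ r) :
    1 - c ≤ (r + 1) * (1 - c / (r + 1)) ^ (s + 1) - r * (1 - c / r) ^ s := by
  have hr1 : (r + 1 : ℝ) ≠ 0 := by positivity
  induction s with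
  | zero =>
    apply le_of_eq
    rw [pow_one, pow_zero, mul_one, mul_sub, mul_div_cancel₀ _ hr1]
    ring
  | succ s ih =>
    have hr : (r : ℝ) ≠ 0 := by
      have : 0 < r := by omega
      positivity
    set X := 1 - c / (r + 1 : ℝ)
    set Y := 1 - c / (r : ℝ)
    have hX : 0 ≤ X := by
      have := (one_sub_div_mem_Icc hc0 hc1 (r := r + 1) (by omega)).1
      push_cast at this
      exact this
    have hY : 1 - c ≤ Y ^ s := one_sub_le_one_sub_div_pow hc0 hc1 (by omega)
    have hXY : r * (X - Y) = c / (r + 1) := by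
      simp only [X, Y]
      field_simp
      ring
    have h1 := mul_le_mul_of_nonneg_left (ih (by omega)) hX
    have h2 := mul_le_mul_of_nonneg_left hY (by positivity : 0 ≤ c / (r + 1))
    have h3 : X * (1 - c) + c / (r + 1) * (1 - c) = 1 - c := by
      simp only [X]
      ring
    have hrec : (r + 1) * X ^ (s + 1 + 1) - r * Y ^ (s + 1) =
        X * ((r + 1) * X ^ (s + 1) - r * Y ^ s) + c / (r + 1) * Y ^ s := by
      linear_combination Y ^ s * hXY
    linarith

lemma greedyRatio_succ_succ_le (hc0 : 0 < c) (hc1 : c ≤ 1) {s r : ℕ} (hs : s ≤ r) :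
    greedyRatio c (s + 1) (r + 1) ≤ greedyRatio c s r + (1 - greedyRatio c s r) / (r + 1) := by
  have key := one_sub_le_succ_mul_pow_sub_mul_pow hc0.le hc1 hs
  unfold greedyRatio
  push_cast
  rw [← sub_nonneg]
  have : (r + 1 : ℝ) ≠ 0 := by positivity
  have e : (1 - (1 - c / r) ^ s) / c + (1 - (1 - (1 - c / r) ^ s) / c) / (r + 1) -
      (1 - (1 - c / (r + 1)) ^ (s + 1)) / c =
      ((r + 1) * (1 - c / (r + 1)) ^ (s + 1) - r * (1 - c / r) ^ s - (1 - c)) / (c * (r + 1)) := by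
    field_simp
    ring
  rw [e]
  apply div_nonneg (by linarith) (by positivity)

/-- The analysis of the greedy algorithm on a uniform matroid, abstracted: `ρ j` is the gain
of step `j`, `R j` the part of `g O` that the first `j` steps have not yet accounted for, and
`r j` the number of elements of `O` not chosen in the first `j` steps. -/
theorem greedyRatio_mul_le_sum (hc0 : 0 < c) (hc1 : c ≤ 1) :
    ∀ (s : ℕ) (ρ R : ℕ → ℝ) (r : ℕ → ℕ), s ≤ r 0 → (∀ j < s, 0 ≤ ρ j) →
      (∀ j < s, R j ≤ r j * ρ j) →
      (∀ j < s, (R (j + 1) = R j - ρ j ∧ r (j + 1) + 1 = r j) ∨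
        (R (j + 1) = R j - c * ρ j ∧ r (j + 1) = r j)) →
      greedyRatio c s (r 0) * R 0 ≤ ∑ j ∈ range s, ρ j
  | 0, _, _, _, _, _, _, _ => by simp [greedyRatio_zero]
  | s + 1, ρ, R, r, hs, hρ, hR, hstep => by
    have hr0 : 0 < r 0 := by omega
    have hsum_nonneg : 0 ≤ ∑ j ∈ range s, ρ (j + 1) :=
      sum_nonneg fun j hj ↦ hρ _ (by have := mem_range.1 hj; omega)
    rw [sum_range_succ']
    rcases le_or_gt (R 0) 0 with hR0 | hR0
    · nlinarith [greedyRatio_nonneg hc0 hc1 (s + 1) hr0, hρ 0 (by omega)]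
    have ih := greedyRatio_mul_le_sum hc0 hc1 s (fun j ↦ ρ (j + 1)) (fun j ↦ R (j + 1))
      (fun j ↦ r (j + 1)) (by rcases hstep 0 (by omega) with h | h <;> omega)
      (fun j hj ↦ hρ _ (by omega)) (fun j hj ↦ hR _ (by omega)) (fun j hj ↦ hstep _ (by omega))
    have hRρ : R 0 / r 0 ≤ ρ 0 :=
      (div_le_iff₀ (by exact_mod_cast hr0)).2 (by linarith [hR 0 (by omega)])
    -- Step `0` has weight `w = 1` or `w = c`, and `greedyRatio` obeys the matching recursion
    -- with `φ'` the ratio of the remaining `s` steps.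
    have key : ∀ w φ' : ℝ, w * φ' ≤ 1 → greedyRatio c (s + 1) (r 0) ≤ φ' + (1 - w * φ') / r 0 →
        R 1 = R 0 - w * ρ 0 → φ' * R 1 ≤ ∑ j ∈ range s, ρ (j + 1) →
        greedyRatio c (s + 1) (r 0) * R 0 ≤ ∑ j ∈ range s, ρ (j + 1) + ρ 0 := by
      intro w φ' hw hφ hR1 hih
      have h1 := mul_le_mul_of_nonneg_right hφ hR0.le
      have h2 := mul_le_mul_of_nonneg_left hRρ (sub_nonneg.2 hw)
      rw [hR1] at hih
      have : (φ' + (1 - w * φ') / r 0) * R 0 = φ' * R 0 + (1 - w * φ') * (R 0 / r 0) := by ring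
      nlinarith
    have step0 := hstep 0 (by omega)
    rw [zero_add] at step0
    rcases step0 with ⟨hR1, hr1⟩ | ⟨hR1, hr1⟩
    · have hs1 : s ≤ r 1 := by omega
      refine key 1 _ (by linarith [greedyRatio_le_one hc0 hc1 hs1]) ?_ (by linarith) ih
      rw [← hr1]
      simpa using greedyRatio_succ_succ_le hc0 hc1 hs1
    · rw [hr1] at ih
      exact key c _ (mul_greedyRatio_le_one hc0 hc1 s hr0) (greedyRatio_succ hc0.ne' s _).le hR1 ih

end GreedyRatio

theorem sum_comp_le_sum_of_card_filter_le {β ι : Type*} [DecidableEq β] [LinearOrder ι]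
    {ρ : ι → ℝ} {S : Set ι} (hρ : AntitoneOn ρ S) {J : Finset ι} (hJ : ∀ i ∈ J, i ∈ S)
    (hρJ : ∀ i ∈ J, 0 ≤ ρ i) {φ : β → ι} (s : Finset β) (hφ : ∀ x ∈ s, φ x ∈ S)
    (hcard : ∀ t, #{x ∈ s | φ x ≤ t} ≤ #{i ∈ J | i ≤ t}) :
    ∑ x ∈ s, ρ (φ x) ≤ ∑ i ∈ J, ρ i := by
  induction s using Finset.induction_on_max_value φ generalizing J with
  | empty => exact sum_nonneg hρJ
  | insert x s hx hmax ih =>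
    -- Match `x`, whose `φ`-value is largest, with the largest `j ∈ J` below `φ x`.
    have hall : #{y ∈ insert x s | φ y ≤ φ x} = #s + 1 := by
      rw [filter_true_of_mem fun y hy ↦ ?_, card_insert_of_notMem hx]
      rcases mem_insert.1 hy with rfl | hy
      exacts [le_rfl, hmax y hy]
    have hx_card := hcard (φ x)
    rw [hall] at hx_card
    have hne : {i ∈ J | i ≤ φ x}.Nonempty := card_pos.1 (by omega)
    set j := {i ∈ J | i ≤ φ x}.max' hne
    obtain ⟨hjJ, hjx⟩ := mem_filter.1 ({i ∈ J | i ≤ φ x}.max'_mem hne)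
    have hjmax : ∀ i ∈ J, i ≤ φ x → i ≤ j := fun i hi hix ↦ le_max' _ _ (mem_filter.2 ⟨hi, hix⟩)
    have hcard' : ∀ t, #{y ∈ s | φ y ≤ t} ≤ #{i ∈ J.erase j | i ≤ t} := by
      intro t
      have hst := hcard t
      rw [filter_insert] at hst
      rw [filter_erase]
      by_cases hjt : j ≤ t
      · rw [card_erase_of_mem (mem_filter.2 ⟨hjJ, hjt⟩)]
        by_cases hxt : φ x ≤ t
        · rw [if_pos hxt, card_insert_of_notMem (by simp [hx])] at hst
          omega
        · have hle : #{y ∈ s | φ y ≤ t} ≤ #s := card_filter_le _ _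
          have heq : {i ∈ J | i ≤ φ x} = {i ∈ J | i ≤ t} := filter_congr fun i hi ↦
            ⟨fun h ↦ (hjmax i hi h).trans hjt, fun h ↦ h.trans (not_le.1 hxt).le⟩
          rw [heq] at hx_card
          omega
      · rw [erase_eq_of_notMem (by simp [hjt])]
        exact (card_le_card (filter_subset_filter _ (subset_insert x s))).trans (hcard t)
    rw [sum_insert hx, ← add_sum_erase J _ hjJ]
    exact add_le_add (hρ (hJ j hjJ) (hφ x (mem_insert_self x s)) hjx)
      (ih (fun i hi ↦ hJ i (mem_of_mem_erase hi)) (fun i hi ↦ hρJ i (mem_of_mem_erase hi))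
        (fun y hy ↦ hφ y (mem_insert_of_mem hy)) hcard')

section Greedy

variable {β : Type*} [DecidableEq β] {I : Finset β → Prop} {f g : Finset β → ℝ} {c : ℝ}

namespace PolymatroidFn

lemma nonneg (hg : PolymatroidFn g) (S : Finset β) : 0 ≤ g S :=
  hg.2.2 ▸ hg.1 S.empty_subset

lemma marginal_nonneg (hg : PolymatroidFn g) (A : Finset β) (j : β) :
    0 ≤ g (insert j A) - g A :=
  sub_nonneg.2 (hg.1 (subset_insert j A))

lemma marginal_le_singleton (hg : PolymatroidFn g) (A : Finset β) (j : β) :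
    g (insert j A) - g A ≤ g {j} := by
  by_cases hj : j ∈ A
  · simpa [insert_eq_of_mem hj] using hg.nonneg {j}
  · simpa [hg.2.2] using hg.2.1 A.empty_subset j hj

lemma le_add_sum_marginal (hg : PolymatroidFn g) (A B : Finset β) :
    g (A ∪ B) ≤ g A + ∑ b ∈ B \ A, (g (insert b A) - g A) := by
  induction B using Finset.induction_on with
  | empty => simp
  | insert b B hb ih =>
    by_cases hbA : b ∈ A
    · rwa [union_insert, insert_eq_of_mem (mem_union_left B hbA), insert_sdiff_of_mem _ hbA]
    · rw [union_insert, insert_sdiff_of_notMem _ hbA, sum_insert (by simp [hb] : b ∉ B \ A)]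
      have := hg.2.1 (subset_union_left : A ⊆ A ∪ B) b (by simp [hbA, hb])
      linarith

variable [Fintype β]

lemma totalCurvature_nonneg (hg : PolymatroidFn g) : 0 ≤ totalCurvature g := by
  refine Real.sSup_nonneg fun x ⟨j, hj, hx⟩ ↦ ?_
  have hpos : 0 < g {j} - g ∅ := sub_pos.2 ((hg.1 (empty_subset _)).lt_of_ne' hj)
  have := hg.2.1 (empty_subset (univ.erase j)) j (notMem_erase j _)
  rw [insert_erase (mem_univ j), insert_empty] at this
  rw [hx, sub_nonneg, div_le_one hpos]
  linarith

lemma totalCurvature_le_one (hg : PolymatroidFn g) : totalCurvature g ≤ 1 := by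
  refine Real.sSup_le (fun x ⟨j, hj, hx⟩ ↦ ?_) zero_le_one
  rw [hx, sub_le_self_iff]
  exact div_nonneg (sub_nonneg.2 (hg.1 (erase_subset _ _))) (sub_nonneg.2 (hg.1 (empty_subset _)))

lemma one_sub_mul_le_marginal_univ (hg : PolymatroidFn g) (hc : totalCurvature g ≤ c) (j : β) :
    (1 - c) * g {j} ≤ g univ - g (univ.erase j) := by
  have hmarg : 0 ≤ g univ - g (univ.erase j) := sub_nonneg.2 (hg.1 (erase_subset _ _))
  rcases eq_or_ne (g {j}) (g ∅) with hj | hj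
  · rwa [hj, hg.2.2, mul_zero]
  have hpos : 0 < g {j} - g ∅ := sub_pos.2 ((hg.1 (empty_subset _)).lt_of_ne' hj)
  have hbdd : BddAbove {x : ℝ | ∃ j : β, g {j} ≠ g ∅ ∧
      x = 1 - (g univ - g (univ.erase j)) / (g {j} - g ∅)} :=
    (Set.finite_range fun j : β ↦ 1 - (g univ - g (univ.erase j)) / (g {j} - g ∅)).bddAbove.mono
      (by rintro _ ⟨j, -, rfl⟩; exact ⟨j, rfl⟩)
  have hle := (le_csSup hbdd ⟨j, hj, rfl⟩).trans hc
  have := (le_div_iff₀ hpos).1 (by linarith : 1 - c ≤ (g univ - g (univ.erase j)) / (g {j} - g ∅))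
  rw [hg.2.2, sub_zero] at this
  exact this

lemma one_sub_mul_marginal_le (hg : PolymatroidFn g) (hc : totalCurvature g ≤ c) (hc1 : c ≤ 1)
    (A : Finset β) {B : Finset β} {j : β} (hj : j ∉ B) :
    (1 - c) * (g (insert j A) - g A) ≤ g (insert j B) - g B := by
  have h1 := mul_le_mul_of_nonneg_left (hg.marginal_le_singleton A j) (sub_nonneg.2 hc1)
  have h2 := hg.one_sub_mul_le_marginal_univ hc j
  have h3 := hg.2.1 (subset_erase.2 ⟨subset_univ B, hj⟩) j (notMem_erase j _)
  rw [insert_erase (mem_univ j)] at h3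
  linarith

end PolymatroidFn

lemma Augmentation.card_le_of_forall_not_indep_insert (hI : Augmentation I) {A B : Finset β}
    (hA : I A) (hB : I B) (h : ∀ x ∈ B, x ∉ A → ¬ I (insert x A)) : #B ≤ #A := by
  by_contra! hlt
  obtain ⟨x, hxB, hxA, hx⟩ := hI hA hB hlt
  exact h x hxB hxA hx

def prefixSet (a : ℕ → β) (t : ℕ) : Finset β :=
  (range t).image a

def prefixGain (g : Finset β → ℝ) (a : ℕ → β) (i : ℕ) : ℝ :=
  g (prefixSet a (i + 1)) - g (prefixSet a i)

/-- `a 0, a 1, …, a (n - 1)` are the elements chosen, in order, by a run of `n` greedy steps. -/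
def IsGreedyRun (I : Finset β → Prop) (g : Finset β → ℝ) (a : ℕ → β) (n : ℕ) : Prop :=
  ∀ i < n, GreedyStep I g (prefixSet a i) (prefixSet a (i + 1))

@[simp] lemma prefixSet_zero (a : ℕ → β) : prefixSet a 0 = ∅ := by
  simp [prefixSet]

lemma prefixSet_succ (a : ℕ → β) (t : ℕ) : prefixSet a (t + 1) = insert (a t) (prefixSet a t) := by
  simp [prefixSet, range_add_one, image_insert]

lemma prefixSet_mono (a : ℕ → β) : Monotone (prefixSet a) :=
  fun _ _ h ↦ image_subset_image (range_subset_range.2 h)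

lemma sum_range_prefixGain (g : Finset β → ℝ) (a : ℕ → β) (t : ℕ) :
    ∑ i ∈ range t, prefixGain g a i = g (prefixSet a t) - g ∅ := by
  rw [← prefixSet_zero a]
  exact sum_range_sub (fun i ↦ g (prefixSet a i)) t

lemma GreedyStep.congr (hfg : ∀ S, I S → g S = f S) {S S' : Finset β}
    (h : GreedyStep I f S S') : GreedyStep I g S S' := by
  obtain ⟨x, hxS, hxI, rfl, hmax⟩ := h
  refine ⟨x, hxS, hxI, rfl, fun b hb hbI ↦ ?_⟩
  rw [hfg _ hbI, hfg _ hxI]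
  exact hmax b hb hbI

lemma Relation.ReflTransGen.exists_isGreedyRun [Nonempty β] {G : Finset β}
    (h : Relation.ReflTransGen (GreedyStep I f) ∅ G) :
    ∃ a n, IsGreedyRun I f a n ∧ prefixSet a n = G := by
  induction h with
  | refl => exact ⟨fun _ ↦ Classical.arbitrary β, 0, fun i hi ↦ absurd hi (Nat.not_lt_zero i), rfl⟩
  | tail _ hstep ih =>
    obtain ⟨a, n, hrun, rfl⟩ := ih
    obtain ⟨x, -, -, rfl, -⟩ := id hstep
    have hpre : ∀ t ≤ n, prefixSet (Function.update a n x) t = prefixSet a t := fun t ht ↦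
      image_congr fun i hi ↦ Function.update_of_ne (by have := mem_range.1 hi; omega) _ _
    have hlast : prefixSet (Function.update a n x) (n + 1) = insert x (prefixSet a n) := by
      rw [prefixSet_succ, hpre n le_rfl, Function.update_self n x a]
    refine ⟨Function.update a n x, n + 1, fun i hi ↦ ?_, hlast⟩
    rcases (Nat.lt_succ_iff.1 hi).lt_or_eq with hi | rfl
    · rw [hpre i hi.le, hpre (i + 1) hi]
      exact hrun i hi
    · rwa [hpre i le_rfl, hlast]

lemma prefixGain_nonneg (hg : PolymatroidFn g) (a : ℕ → β) (i : ℕ) : 0 ≤ prefixGain g a i := by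
  rw [prefixGain, prefixSet_succ]
  exact hg.marginal_nonneg _ _

variable {a : ℕ → β} {n K : ℕ} {O : Finset β}

lemma exists_last_indep_insert_prefixSet (hI : Hereditary I)
    (hmax : ∀ b ∉ prefixSet a n, ¬ I (insert b (prefixSet a n))) (hO : I O) :
    ∃ φ : β → ℕ, ∀ o ∈ O \ prefixSet a n, φ o < n ∧ I (insert o (prefixSet a (φ o))) ∧
      ∀ t, φ o < t → t ≤ n → ¬ I (insert o (prefixSet a t)) := by
  classical
  refine ⟨fun o ↦ Nat.findGreatest (fun t ↦ I (insert o (prefixSet a t))) n, fun o ho ↦ ?_⟩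
  obtain ⟨hoO, hoG⟩ := mem_sdiff.1 ho
  have hspec := Nat.findGreatest_spec (P := fun t ↦ I (insert o (prefixSet a t))) (m := 0)
    (Nat.zero_le n) (hI hO (by simpa using hoO))
  exact ⟨(Nat.findGreatest_le n).lt_of_ne fun heq ↦ hmax o hoG (heq ▸ hspec), hspec,
    fun t ht htn ↦ Nat.findGreatest_is_greatest ht htn⟩

namespace IsGreedyRun

lemma congr (hfg : ∀ S, I S → g S = f S) (h : IsGreedyRun I f a n) : IsGreedyRun I g a n :=
  fun i hi ↦ (h i hi).congr hfg

lemma notMem_prefixSet (h : IsGreedyRun I g a n) {i : ℕ} (hi : i < n) : a i ∉ prefixSet a i := by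
  obtain ⟨x, hx, -, hS', -⟩ := h i hi
  intro hai
  rw [prefixSet_succ, insert_eq_of_mem hai] at hS'
  exact hx (hS' ▸ mem_insert_self x _)

lemma indep_succ (h : IsGreedyRun I g a n) {i : ℕ} (hi : i < n) : I (prefixSet a (i + 1)) := by
  obtain ⟨x, -, hxI, hS', -⟩ := h i hi
  rwa [hS']

lemma apply_insert_le (h : IsGreedyRun I g a n) {i : ℕ} (hi : i < n) {b : β}
    (hb : b ∉ prefixSet a i) (hbI : I (insert b (prefixSet a i))) :
    g (insert b (prefixSet a i)) ≤ g (prefixSet a (i + 1)) := by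
  obtain ⟨x, -, -, hS', hmax⟩ := h i hi
  rw [hS']
  exact hmax b hb hbI

lemma indep (hI : IndepSystem I) (h : IsGreedyRun I g a n) {t : ℕ} (ht : t ≤ n) :
    I (prefixSet a t) := by
  rcases t with _ | t
  · obtain ⟨⟨S, hS⟩, hher⟩ := hI
    simpa using hher hS (empty_subset S)
  · exact h.indep_succ ht

lemma injOn (h : IsGreedyRun I g a n) : Set.InjOn a (range n) := by
  intro i hi j hj hij
  by_contra hne
  wlog hlt : i < j generalizing i j
  · exact this hj hi hij.symm (Ne.symm hne) (lt_of_le_of_ne (not_lt.1 hlt) (Ne.symm hne))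
  refine h.notMem_prefixSet (mem_range.1 hj) ?_
  rw [← hij]
  exact mem_image_of_mem a (mem_range.2 hlt)

lemma card_inter_prefixSet (h : IsGreedyRun I g a n) (W : Finset β) {t : ℕ} (ht : t ≤ n) :
    #(W ∩ prefixSet a t) = #{i ∈ range t | a i ∈ W} := by
  rw [inter_comm, ← filter_mem_eq_inter, prefixSet, filter_image, card_image_of_injOn]
  exact h.injOn.mono (coe_subset.2 ((filter_subset _ _).trans (range_subset_range.2 ht)))

lemma card_prefixSet (h : IsGreedyRun I g a n) {t : ℕ} (ht : t ≤ n) : #(prefixSet a t) = t := by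
  rw [prefixSet, card_image_of_injOn (h.injOn.mono (coe_subset.2 (range_subset_range.2 ht))),
    card_range]

lemma antitoneOn_prefixGain (hI : Hereditary I) (hg : PolymatroidFn g) (h : IsGreedyRun I g a n) :
    AntitoneOn (prefixGain g a) (Set.Iio n) := by
  refine antitoneOn_of_add_one_le Set.ordConnected_Iio fun i _ _ (hi : i + 1 < n) ↦ ?_
  have hnot : a (i + 1) ∉ prefixSet a (i + 1) := h.notMem_prefixSet hi
  have hsub : prefixSet a i ⊆ prefixSet a (i + 1) := prefixSet_mono a (Nat.le_succ i)
  have hfeas : I (insert (a (i + 1)) (prefixSet a i)) := hI (h.indep_succ hi) <| by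
    rw [prefixSet_succ a (i + 1)]
    exact insert_subset_insert _ hsub
  have hsm := hg.2.1 hsub _ hnot
  have hgreedy := h.apply_insert_le (by omega) (fun hmem ↦ hnot (hsub hmem)) hfeas
  rw [prefixGain, prefixGain, prefixSet_succ a (i + 1)]
  linarith

/-- The elements of `O` that have become inadmissible by step `u`, together with those already
chosen, form an independent set spanned by the first `u` greedy choices. -/
lemma card_filter_lt_le (hI : IsMatroid I) (h : IsGreedyRun I g a n) (hO : I O) {φ : β → ℕ}
    (hφ : ∀ o ∈ O \ prefixSet a n, ∀ t, φ o < t → t ≤ n → ¬ I (insert o (prefixSet a t)))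
    {u : ℕ} (hu : u ≤ n) :
    #{o ∈ O \ prefixSet a n | φ o < u} ≤ #{i ∈ range u | a i ∉ O} := by
  have hdisj : Disjoint (O ∩ prefixSet a u) {o ∈ O \ prefixSet a n | φ o < u} :=
    disjoint_left.2 fun x hx hx' ↦ (mem_sdiff.1 (mem_filter.1 hx').1).2
      (prefixSet_mono a hu (mem_inter.1 hx).2)
  have hD := hI.2.card_le_of_forall_not_indep_insert (h.indep hI.1 hu)
    (hI.1.2 hO (union_subset inter_subset_left ((filter_subset _ _).trans sdiff_subset)))
    fun x hx hxu ↦ by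
      rcases mem_union.1 hx with hx | hx
      · exact absurd (mem_inter.1 hx).2 hxu
      · exact hφ x (mem_filter.1 hx).1 u (mem_filter.1 hx).2 hu
  rw [card_union_of_disjoint hdisj, h.card_prefixSet hu, h.card_inter_prefixSet O hu] at hD
  have := card_filter_add_card_filter_not (s := range u) (fun i ↦ a i ∈ O)
  rw [card_range] at this
  omega

lemma sum_marginal_le (hI : IsMatroid I) (hg : PolymatroidFn g) (h : IsGreedyRun I g a n)
    (hmax : ∀ b ∉ prefixSet a n, ¬ I (insert b (prefixSet a n))) (hO : I O) :
    ∑ o ∈ O \ prefixSet a n, (g (insert o (prefixSet a n)) - g (prefixSet a n)) ≤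
      ∑ i ∈ range n with a i ∉ O, prefixGain g a i := by
  obtain ⟨φ, hφ⟩ := exists_last_indep_insert_prefixSet hI.1.2 hmax hO
  calc ∑ o ∈ O \ prefixSet a n, (g (insert o (prefixSet a n)) - g (prefixSet a n))
      ≤ ∑ o ∈ O \ prefixSet a n, prefixGain g a (φ o) := sum_le_sum fun o ho ↦ by
        obtain ⟨hlt, hind, -⟩ := hφ o ho
        have hsub := prefixSet_mono a hlt.le
        have hoG := (mem_sdiff.1 ho).2
        have := hg.2.1 hsub o hoG
        have := h.apply_insert_le hlt (fun hmem ↦ hoG (hsub hmem)) hind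
        rw [prefixGain]
        linarith
    _ ≤ ∑ i ∈ range n with a i ∉ O, prefixGain g a i := by
      refine sum_comp_le_sum_of_card_filter_le (h.antitoneOn_prefixGain hI.1.2 hg)
        (fun i hi ↦ mem_range.1 (mem_filter.1 hi).1) (fun i _ ↦ prefixGain_nonneg hg a i) _
        (fun o ho ↦ (hφ o ho).1) fun t ↦ ?_
      have hu : min (t + 1) n ≤ n := min_le_right _ _
      convert h.card_filter_lt_le hI hO (fun o ho ↦ (hφ o ho).2.2) hu using 2
      · exact filter_congr fun o ho ↦ by have := (hφ o ho).1; omega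
      · ext i
        simp only [mem_filter, mem_range, lt_min_iff, Nat.lt_succ_iff]
        tauto

variable [Fintype β]

lemma add_mul_sum_prefixGain_le (hg : PolymatroidFn g) (hc : totalCurvature g ≤ c)
    (hc1 : c ≤ 1) (h : IsGreedyRun I g a n) (W : Finset β) {t : ℕ} (ht : t ≤ n) :
    g W + (1 - c) * ∑ i ∈ range t with a i ∉ W, prefixGain g a i ≤ g (W ∪ prefixSet a t) := by
  induction t with
  | zero => simp
  | succ t ih =>
    rw [sum_filter, sum_range_succ, ← sum_filter, prefixSet_succ, union_insert]
    split_ifs with haW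
    · rw [add_zero, insert_eq_of_mem (mem_union_left _ haW)]
      exact ih (by omega)
    · have := hg.one_sub_mul_marginal_le hc hc1 (prefixSet a t)
        (by simp [haW, h.notMem_prefixSet ht] : a t ∉ W ∪ prefixSet a t)
      rw [← prefixSet_succ, ← prefixGain] at this
      linarith [ih (by omega)]

theorem le_one_add_mul (hI : IsMatroid I) (hg : PolymatroidFn g) (hc0 : 0 ≤ c)
    (hc : totalCurvature g ≤ c) (hc1 : c ≤ 1) (h : IsGreedyRun I g a n)
    (hmax : ∀ b ∉ prefixSet a n, ¬ I (insert b (prefixSet a n))) (hO : I O) :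
    g O ≤ (1 + c) * g (prefixSet a n) := by
  have hlow := h.add_mul_sum_prefixGain_le hg hc hc1 O le_rfl
  have hup := hg.le_add_sum_marginal (prefixSet a n) O
  have hmarg := h.sum_marginal_le hI hg hmax hO
  have hσ : ∑ i ∈ range n with a i ∉ O, prefixGain g a i ≤ g (prefixSet a n) :=
    calc ∑ i ∈ range n with a i ∉ O, prefixGain g a i
        ≤ ∑ i ∈ range n, prefixGain g a i :=
          sum_le_sum_of_subset_of_nonneg (filter_subset _ _) fun i _ _ ↦ prefixGain_nonneg hg a i
      _ = g (prefixSet a n) := by rw [sum_range_prefixGain, hg.2.2, sub_zero]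
  rw [union_comm] at hup
  nlinarith [mul_le_mul_of_nonneg_left hσ hc0]

lemma sub_add_mul_sum_prefixGain_le (huni : ∀ S, I S ↔ #S ≤ K) (hg : PolymatroidFn g)
    (hc : totalCurvature g ≤ c) (hc1 : c ≤ 1) (h : IsGreedyRun I g a K) (hO : #O ≤ K) {t : ℕ}
    (ht : t < K) :
    g O - g (prefixSet a t) + (1 - c) * ∑ i ∈ range t with a i ∉ O, prefixGain g a i ≤
      (K - #(O ∩ prefixSet a t) : ℕ) * prefixGain g a t := by
  have hlow := h.add_mul_sum_prefixGain_le hg hc hc1 O ht.le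
  have hup := hg.le_add_sum_marginal (prefixSet a t) O
  have hmarg : ∑ o ∈ O \ prefixSet a t, (g (insert o (prefixSet a t)) - g (prefixSet a t)) ≤
      #(O \ prefixSet a t) • prefixGain g a t :=
    sum_le_card_nsmul _ _ _ fun o ho ↦ by
      have hfeas : I (insert o (prefixSet a t)) := (huni _).2 <|
        (card_insert_le _ _).trans (by rw [h.card_prefixSet ht.le]; omega)
      have := h.apply_insert_le ht (mem_sdiff.1 ho).2 hfeas
      rw [prefixGain]
      linarith
  have hcard : #(O \ prefixSet a t) ≤ K - #(O ∩ prefixSet a t) := by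
    have := card_sdiff_add_card_inter O (prefixSet a t)
    omega
  have := mul_le_mul_of_nonneg_right (Nat.cast_le (α := ℝ).2 hcard) (prefixGain_nonneg hg a t)
  rw [nsmul_eq_mul] at hmarg
  rw [union_comm] at hup
  linarith

theorem greedyRatio_mul_le (huni : ∀ S, I S ↔ #S ≤ K) (hg : PolymatroidFn g) (hc0 : 0 < c)
    (hc : totalCurvature g ≤ c) (hc1 : c ≤ 1) (h : IsGreedyRun I g a K) (hO : #O ≤ K) :
    greedyRatio c K K * g O ≤ g (prefixSet a K) := by
  have key := greedyRatio_mul_le_sum hc0 hc1 K (prefixGain g a)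
    (fun t ↦ g O - g (prefixSet a t) + (1 - c) * ∑ i ∈ range t with a i ∉ O, prefixGain g a i)
    (fun t ↦ K - #(O ∩ prefixSet a t)) (by simp) (fun j _ ↦ prefixGain_nonneg hg a j)
    (fun j hj ↦ h.sub_add_mul_sum_prefixGain_le huni hg hc hc1 hO hj) fun j hj ↦ ?_
  · simpa [sum_range_prefixGain, hg.2.2] using key
  have hK : #(O ∩ prefixSet a (j + 1)) ≤ K := (card_le_card inter_subset_left).trans hO
  rw [range_add_one, filter_insert]
  rw [prefixSet_succ] at hK ⊢
  by_cases hjO : a j ∈ O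
  · rw [inter_insert_of_mem hjO,
      card_insert_of_notMem fun hm ↦ h.notMem_prefixSet hj (mem_inter.1 hm).2] at hK ⊢
    left
    refine ⟨?_, by omega⟩
    rw [if_neg (not_not.2 hjO), prefixGain, prefixSet_succ]
    ring
  · rw [inter_insert_of_notMem hjO]
    right
    refine ⟨?_, rfl⟩
    rw [if_pos hjO, sum_insert (by simp), prefixGain, prefixSet_succ]
    ring

end IsGreedyRun

variable [Fintype β]

/-- The curvatures `c(g)` of the polymatroid extensions `g ∈ 𝓔_f` of `f`. -/
def extensionCurvatures (I : Finset β → Prop) (f : Finset β → ℝ) : Set ℝ :=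
  {x | ∃ g : Finset β → ℝ, PolymatroidFn g ∧ (∀ S, I S → g S = f S) ∧ x = totalCurvature g}

theorem apply_sInf_extensionCurvatures_le
    (hne : ∃ g : Finset β → ℝ, PolymatroidFn g ∧ ∀ S, I S → g S = f S) {F H : ℝ → ℝ}
    (hF : ContinuousAt F (sInf (extensionCurvatures I f)))
    (hH : ContinuousAt H (sInf (extensionCurvatures I f)))
    (h : ∀ (g : Finset β → ℝ) (c : ℝ), PolymatroidFn g → (∀ S, I S → g S = f S) →
      totalCurvature g ≤ c → sInf (extensionCurvatures I f) ≤ c → c ≤ 1 → F c ≤ H c) :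
    F (sInf (extensionCurvatures I f)) ≤ H (sInf (extensionCurvatures I f)) := by
  set d := sInf (extensionCurvatures I f)
  obtain ⟨g₀, hg₀, hg₀f⟩ := hne
  have hbdd : BddBelow (extensionCurvatures I f) :=
    ⟨0, fun _ ⟨g, hg, _, hx⟩ ↦ hx ▸ hg.totalCurvature_nonneg⟩
  have hd1 : d ≤ 1 := (csInf_le hbdd ⟨g₀, hg₀, hg₀f, rfl⟩).trans hg₀.totalCurvature_le_one
  -- Above `d` there are extensions of curvature below `c`; cap `c` at `1` to stay in `[d, 1]`.
  have hmin : Filter.Tendsto (fun c ↦ min c 1) (nhdsWithin d (Set.Ioi d)) (nhds d) := by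
    have : ContinuousAt (fun c : ℝ ↦ min c 1) d := by fun_prop
    simpa [min_eq_left hd1] using this.tendsto.mono_left nhdsWithin_le_nhds
  refine le_of_tendsto_of_tendsto (hF.tendsto.comp hmin) (hH.tendsto.comp hmin)
    (eventually_nhdsWithin_of_forall fun c (hc : d < c) ↦ ?_)
  obtain ⟨_, ⟨g, hg, hgf, rfl⟩, hlt⟩ :=
    exists_lt_of_csInf_lt (s := extensionCurvatures I f) ⟨_, g₀, hg₀, hg₀f, rfl⟩ hc
  exact h g _ hg hgf (le_min hlt.le hg.totalCurvature_le_one) (le_min hc.le hd1) (min_le_right _ _)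

end Greedy

/-- Greedy bounds in terms of `d = inf{c(g) : g ∈ 𝓔_f}` for a polymatroid
function `f` defined on a matroid of rank `K` that admits a polymatroid
extension to the whole power set. -/
theorem greedy_bound_extension_curvature {α : Type*} [DecidableEq α] [Fintype α]
    (I : Finset α → Prop) (hI : IsMatroid I) (K : ℕ)
    (hrank : ∀ B : Finset α, I B → (∀ a ∉ B, ¬ I (insert a B)) → B.card = K)
    (f : Finset α → ℝ) (hf : PolymatroidOn I f)
    (hne : ∃ g : Finset α → ℝ, PolymatroidFn g ∧ ∀ S, I S → g S = f S)
    (d : ℝ)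
    (hd : d = sInf {x : ℝ | ∃ g : Finset α → ℝ, PolymatroidFn g ∧
      (∀ S, I S → g S = f S) ∧ x = totalCurvature g})
    (G O : Finset α) (hG : IsGreedy I f G) (hO : IsOptimal I f O) :
    (1 + d) * f G ≥ f O ∧
      ((∀ S : Finset α, I S ↔ S.card ≤ K) → 0 < d →
        f G ≥ (1 / d) * (1 - (1 - d / (K : ℝ)) ^ K) * f O) := by
  rcases isEmpty_or_nonempty α with hα | hα
  · obtain rfl : G = ∅ := Subsingleton.elim _ _
    obtain rfl : O = ∅ := Subsingleton.elim _ _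
    simp [hf.1]
  obtain ⟨a, n, hrun, rfl⟩ := hG.1.exists_isGreedyRun
  have hGI := hrun.indep hI.1 le_rfl
  obtain rfl : n = K := (hrun.card_prefixSet le_rfl).symm.trans (hrank _ hGI hG.2)
  obtain rfl : d = sInf (extensionCurvatures I f) := hd
  refine ⟨apply_sInf_extensionCurvatures_le hne (F := fun _ ↦ f O)
    (H := fun c ↦ (1 + c) * f (prefixSet a n)) (by fun_prop) (by fun_prop)
    fun g c hg hgf hgc _ hc1 ↦ ?_, fun huni hd ↦ ?_⟩
  · have := (hrun.congr hgf).le_one_add_mul hI hg (hg.totalCurvature_nonneg.trans hgc) hgc hc1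
      hG.2 hO.1
    rwa [hgf _ hO.1, hgf _ hGI] at this
  · have := apply_sInf_extensionCurvatures_le hne (F := fun c ↦ greedyRatio c n n * f O)
      (H := fun _ ↦ f (prefixSet a n)) (by unfold greedyRatio; fun_prop (disch := exact hd.ne'))
      (by fun_prop) fun g c hg hgf hgc hdc hc1 ↦ by
        have := (hrun.congr hgf).greedyRatio_mul_le huni hg (hd.trans_le hdc) hgc hc1
          ((huni O).1 hO.1)
        rwa [hgf _ hO.1, hgf _ hGI] at this
    convert this using 1
    rw [greedyRatio]
    ring
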